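/- arXiv:1304.0496 — 7 statements merged into one kernel-verified Lean document; each statement's English description precedes it below -/
import Mathlib

section
/- Let p, q, r ≥ 0 be real numbers and let α, β, γ be real numbers with α + β + γ = π. Then p + q + r ≥ 2√(qr)·cos α + 2√(pr)·cos β + 2√(pq)·cos γ. -/
open Real

/-- Wolstenholme's inequality. -/
theorem two_mul_cos_add_le_sq_add_sq_add_sq (x y z α β γ : ℝ) (h : α + β + γ = π) :
    2 * y * z * cos α + 2 * x * z * cos β + 2 * x * y * cos γ ≤ x ^ 2 + y ^ 2 + z ^ 2 := by
  have hα : cos α = sin β * sin γ - cos β * cos γ := by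
    rw [show α = π - (β + γ) by linarith, cos_pi_sub, cos_add]
    ring
  have defect : x ^ 2 + y ^ 2 + z ^ 2 - (2 * y * z * cos α + 2 * x * z * cos β + 2 * x * y * cos γ)
      = (x - y * cos γ - z * cos β) ^ 2 + (y * sin γ - z * sin β) ^ 2 := by
    rw [hα]
    linear_combination -y ^ 2 * sin_sq_add_cos_sq γ - z ^ 2 * sin_sq_add_cos_sq β
  linarith [sq_nonneg (x - y * cos γ - z * cos β), sq_nonneg (y * sin γ - z * sin β)]

theorem statement0 (p q r α β γ : ℝ) (hp : 0 ≤ p) (hq : 0 ≤ q) (hr : 0 ≤ r)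
    (h : α + β + γ = Real.pi) :
    p + q + r ≥ 2 * Real.sqrt (q * r) * Real.cos α + 2 * Real.sqrt (p * r) * Real.cos β +
      2 * Real.sqrt (p * q) * Real.cos γ := by
  have key := two_mul_cos_add_le_sq_add_sq_add_sq (√p) (√q) (√r) α β γ h
  rw [sq_sqrt hp, sq_sqrt hq, sq_sqrt hr] at key
  rw [sqrt_mul hq, sqrt_mul hp, sqrt_mul hp]
  linarith
end

section
/- Let p, q, r ≥ 0 be real numbers and let α, β, γ be real numbers with α = β + γ. Then p + q + r ≥ −2√(qr)·cos α + 2√(pr)·cos β + 2√(pq)·cos γ. -/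
open Real

/-- The defect is `|a - b e^{iγ} - c e^{-iβ}|²`, written out in real and imaginary parts. -/
theorem sq_add_sq_add_sq_sub_cos_eq_sum_sq (a b c β γ : ℝ) :
    a ^ 2 + b ^ 2 + c ^ 2 + 2 * b * c * cos (β + γ) - 2 * a * c * cos β - 2 * a * b * cos γ =
      (a - b * cos γ - c * cos β) ^ 2 + (b * sin γ - c * sin β) ^ 2 := by
  rw [cos_add]
  linear_combination -b ^ 2 * sin_sq_add_cos_sq γ - c ^ 2 * sin_sq_add_cos_sq β

theorem two_mul_cos_add_le_sq_add_sq_add_sq_s1 (a b c β γ : ℝ) :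
    -(2 * b * c * cos (β + γ)) + 2 * a * c * cos β + 2 * a * b * cos γ ≤ a ^ 2 + b ^ 2 + c ^ 2 := by
  have h := sq_add_sq_add_sq_sub_cos_eq_sum_sq a b c β γ
  linarith [sq_nonneg (a - b * cos γ - c * cos β), sq_nonneg (b * sin γ - c * sin β)]

theorem statement1 (p q r α β γ : ℝ) (hp : 0 ≤ p) (hq : 0 ≤ q) (hr : 0 ≤ r)
    (h : α = β + γ) :
    p + q + r ≥ -(2 * Real.sqrt (q * r) * Real.cos α) + 2 * Real.sqrt (p * r) * Real.cos β +
      2 * Real.sqrt (p * q) * Real.cos γ := by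
  subst h
  rw [sqrt_mul hq, sqrt_mul hp, sqrt_mul hp]
  have key := two_mul_cos_add_le_sq_add_sq_add_sq_s1 (√p) (√q) (√r) β γ
  rw [sq_sqrt hp, sq_sqrt hq, sq_sqrt hr] at key
  linarith
end

section
/- Let p, q, r ≥ 0 be real numbers and let α, β, γ be real numbers with β ≥ 0, γ ≥ 0, α = β + γ and α ≤ π. Then p + q + r ≥ 2√(qr)·cos α − 2√(pr)·cos β − 2√(pq)·cos γ. -/
/-!
Write `p = x²`, `q = y²`, `r = z²` with `x, y, z ≥ 0`. The identity
`(x + y cos γ + z cos β)² + (y sin γ - z sin β)² = x² + y² + z² + 2yz cos(β+γ) + 2xz cos β + 2xy cos γ`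
settles the case `cos(β+γ) ≤ 0`, since flipping the sign of the `yz cos(β+γ)` term only adds a
nonnegative quantity. If instead `β + γ ≤ π/2`, then all three cosines are nonnegative and
`x² + y² + z² - 2yz cos(β+γ) ≥ x² + (y - z)²`.
-/

open Real

theorem sq_add_sq_add_sq_add_two_mul_cos_add_nonneg (x y z β γ : ℝ) :
    0 ≤ x ^ 2 + y ^ 2 + z ^ 2 + 2 * y * z * cos (β + γ) + 2 * x * z * cos β
      + 2 * x * y * cos γ := by
  have key : x ^ 2 + y ^ 2 + z ^ 2 + 2 * y * z * cos (β + γ) + 2 * x * z * cos β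
      + 2 * x * y * cos γ
      = (x + y * cos γ + z * cos β) ^ 2 + (y * sin γ - z * sin β) ^ 2 := by
    rw [cos_add]
    linear_combination (-(y ^ 2)) * sin_sq_add_cos_sq γ - z ^ 2 * sin_sq_add_cos_sq β
  rw [key]
  positivity

theorem sq_add_sq_add_sq_sub_two_mul_cos_add_nonneg {x y z β γ : ℝ}
    (hx : 0 ≤ x) (hy : 0 ≤ y) (hz : 0 ≤ z) (hβ : 0 ≤ β) (hγ : 0 ≤ γ) (hβγ : β + γ ≤ π) :
    0 ≤ x ^ 2 + y ^ 2 + z ^ 2 - 2 * y * z * cos (β + γ) + 2 * x * z * cos β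
      + 2 * x * y * cos γ := by
  rcases le_or_gt (β + γ) (π / 2) with hacute | hobtuse
  · have hcβ : 0 ≤ cos β := cos_nonneg_of_mem_Icc ⟨by linarith [pi_pos], by linarith⟩
    have hcγ : 0 ≤ cos γ := cos_nonneg_of_mem_Icc ⟨by linarith [pi_pos], by linarith⟩
    have hyz : y * z * cos (β + γ) ≤ y * z := by
      simpa using mul_le_mul_of_nonneg_left (cos_le_one (β + γ)) (mul_nonneg hy hz)
    nlinarith [sq_nonneg x, sq_nonneg (y - z), mul_nonneg (mul_nonneg hx hz) hcβ,
      mul_nonneg (mul_nonneg hx hy) hcγ]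
  · have hc : cos (β + γ) ≤ 0 := cos_nonpos_of_pi_div_two_le_of_le hobtuse.le (by linarith)
    nlinarith [sq_add_sq_add_sq_add_two_mul_cos_add_nonneg x y z β γ,
      mul_nonpos_of_nonneg_of_nonpos (mul_nonneg hy hz) hc]

theorem statement3 (p q r α β γ : ℝ) (hp : 0 ≤ p) (hq : 0 ≤ q) (hr : 0 ≤ r)
    (hβ : 0 ≤ β) (hγ : 0 ≤ γ) (h : α = β + γ) (hα : α ≤ Real.pi) :
    p + q + r ≥ 2 * Real.sqrt (q * r) * Real.cos α - 2 * Real.sqrt (p * r) * Real.cos β -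
      2 * Real.sqrt (p * q) * Real.cos γ := by
  subst h
  have key := sq_add_sq_add_sq_sub_two_mul_cos_add_nonneg (sqrt_nonneg p) (sqrt_nonneg q)
    (sqrt_nonneg r) hβ hγ hα
  rw [sq_sqrt hp, sq_sqrt hq, sq_sqrt hr] at key
  rw [sqrt_mul hq, sqrt_mul hp, sqrt_mul hp]
  linarith
end

section
/- Let M, B, C be three non-collinear points of the Euclidean plane, and let A' be a point of the segment [B, C] such that ∠BMA' = ∠CMA' (i.e. A' is the foot of the internal bisector of the angle ∠BMC from M). Then |MA'| = (√(|MB|·|MC|) / (|MB| + |MC|)) · √((|MB| + |MC|)² − |BC|²). -/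
/-!
Put `u = B - M`, `v = C - M`, `A' - M = a • u + b • v` with `a + b = 1`. Equality of the two
angles forces `⟪‖v‖ • u - ‖u‖ • v, A' - M⟫ = 0`, and this inner product factors as
`(a ‖u‖ - b ‖v‖) (‖u‖ ‖v‖ - ⟪u, v⟫)`. The second factor is nonzero because `∠BMC ≠ 0`, which gives
the angle bisector theorem `a |MB| = b |MC|`, i.e. `(|MB| + |MC|) (A' - M) = |MC| u + |MB| v`.
Expanding the squared norm of the right-hand side yields `|MB| |MC| ((|MB| + |MC|)² - |BC|²)`.
-/

open EuclideanGeometry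
open scoped InnerProductSpace

namespace InnerProductGeometry

variable {V : Type*} [NormedAddCommGroup V] [InnerProductSpace ℝ V]

theorem norm_norm_smul_add_norm_smul_sq (u v : V) :
    ‖‖v‖ • u + ‖u‖ • v‖ ^ 2 = ‖u‖ * ‖v‖ * ((‖u‖ + ‖v‖) ^ 2 - ‖u - v‖ ^ 2) := by
  rw [norm_add_sq_real, norm_sub_sq_real, norm_smul, norm_smul, real_inner_smul_left,
    real_inner_smul_right, Real.norm_of_nonneg (norm_nonneg _),
    Real.norm_of_nonneg (norm_nonneg _)]
  ring

theorem inner_norm_smul_sub_norm_smul_smul_add_smul (u v : V) (a b : ℝ) :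
    ⟪‖v‖ • u - ‖u‖ • v, a • u + b • v⟫_ℝ = (a * ‖u‖ - b * ‖v‖) * (‖u‖ * ‖v‖ - ⟪u, v⟫_ℝ) := by
  simp only [inner_sub_left, inner_add_right, real_inner_smul_left, real_inner_smul_right,
    real_inner_self_eq_norm_sq, real_inner_comm u v]
  ring

/-- The angle bisector theorem. -/
theorem mul_norm_eq_mul_norm_of_angle_eq {u v : V} {a b : ℝ} (hu : u ≠ 0) (hv : v ≠ 0)
    (huv : angle u v ≠ 0) (hw : a • u + b • v ≠ 0)
    (h : angle u (a • u + b • v) = angle v (a • u + b • v)) :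
    a * ‖u‖ = b * ‖v‖ := by
  have hcos := congrArg Real.cos h
  rw [cos_angle, cos_angle] at hcos
  have hinner : ⟪‖v‖ • u - ‖u‖ • v, a • u + b • v⟫_ℝ = 0 := by
    rw [inner_sub_left, real_inner_smul_left, real_inner_smul_left]
    field_simp [norm_ne_zero_iff.2 hu, norm_ne_zero_iff.2 hv, norm_ne_zero_iff.2 hw] at hcos
    linarith
  have hnot_parallel : ‖u‖ * ‖v‖ - ⟪u, v⟫_ℝ ≠ 0 :=
    sub_ne_zero.2 fun h' ↦ huv ((inner_eq_mul_norm_iff_angle_eq_zero hu hv).1 h'.symm)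
  rw [inner_norm_smul_sub_norm_smul_smul_add_smul] at hinner
  exact sub_eq_zero.1 ((mul_eq_zero.1 hinner).resolve_right hnot_parallel)

theorem norm_smul_add_smul_of_angle_eq {u v : V} {a b : ℝ} (hu : u ≠ 0) (hv : v ≠ 0)
    (huv : angle u v ≠ 0) (hw : a • u + b • v ≠ 0) (hab : a + b = 1)
    (h : angle u (a • u + b • v) = angle v (a • u + b • v)) :
    ‖a • u + b • v‖ = √(‖u‖ * ‖v‖) / (‖u‖ + ‖v‖) * √((‖u‖ + ‖v‖) ^ 2 - ‖u - v‖ ^ 2) := by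
  have hbis := mul_norm_eq_mul_norm_of_angle_eq hu hv huv hw h
  have hsum : 0 < ‖u‖ + ‖v‖ := by positivity
  have hscale : (‖u‖ + ‖v‖) • (a • u + b • v) = ‖v‖ • u + ‖u‖ • v := by
    rw [smul_add, smul_smul, smul_smul]
    congr 2
    · linear_combination hbis + ‖v‖ * hab
    · linear_combination -hbis + ‖u‖ * hab
  have hprod : 0 ≤ ‖u‖ * ‖v‖ := by positivity
  calc ‖a • u + b • v‖ = ‖‖v‖ • u + ‖u‖ • v‖ / (‖u‖ + ‖v‖) := by
        rw [← hscale, norm_smul, Real.norm_of_nonneg hsum.le, mul_div_cancel_left₀ _ hsum.ne']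
    _ = _ := by
        rw [← Real.sqrt_sq (norm_nonneg _), norm_norm_smul_add_norm_smul_sq, Real.sqrt_mul hprod]
        ring

end InnerProductGeometry

theorem statement7 (M B C A' : EuclideanSpace ℝ (Fin 2))
    (h : ¬ Collinear ℝ ({M, B, C} : Set (EuclideanSpace ℝ (Fin 2))))
    (hA' : A' ∈ segment ℝ B C)
    (hbis : ∠ B M A' = ∠ C M A') :
    dist M A' = (Real.sqrt (dist M B * dist M C) / (dist M B + dist M C)) *
      Real.sqrt ((dist M B + dist M C) ^ 2 - dist B C ^ 2) := by
  have h' : ¬ Collinear ℝ ({B, M, C} : Set (EuclideanSpace ℝ (Fin 2))) := by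
    rwa [Set.insert_comm]
  have hA'M : A' ≠ M := by
    rintro rfl
    exact h' (mem_segment_iff_wbtw.1 hA').collinear
  have hBMC : ∠ B M C ≠ 0 := angle_ne_zero_of_not_collinear h'
  obtain ⟨a, b, -, -, hab, rfl⟩ := hA'
  have hsplit : a • B + b • C - M = a • (B - M) + b • (C - M) := by
    rw [smul_sub, smul_sub, sub_add_sub_comm, ← add_smul, hab, one_smul]
  have hBC : B - C = (B - M) - (C - M) := (sub_sub_sub_cancel_right B C M).symm
  simp only [EuclideanGeometry.angle, vsub_eq_sub, hsplit] at hbis hBMC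
  rw [dist_comm M, dist_comm M B, dist_comm M C, dist_eq_norm, dist_eq_norm, dist_eq_norm,
    dist_eq_norm, hsplit, hBC]
  exact InnerProductGeometry.norm_smul_add_smul_of_angle_eq
    (sub_ne_zero.2 (ne₁₂_of_not_collinear h).symm) (sub_ne_zero.2 (ne₁₃_of_not_collinear h).symm)
    hBMC (hsplit ▸ sub_ne_zero.2 hA'M) hab hbis
end

section
/- (Barrow's inequality.) Let A, B, C be affinely independent points of the Euclidean plane and let M be a point of the interior of the triangle ABC (the interior of the convex hull of {A, B, C}). Let A' ∈ [B, C] with ∠BMA' = ∠CMA', let B' ∈ [C, A] with ∠CMB' = ∠AMB', and let C' ∈ [A, B] with ∠AMC' = ∠BMC' (the feet of the internal bisectors of the angles ∠BMC, ∠CMA, ∠AMB from M). Then |MA| + |MB| + |MC| ≥ 2·(|MA'| + |MB'| + |MC'|). -/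
/-!
Put `a = |MA|`, `b = |MB|`, `c = |MC|` and let `α = ∠BMC`, `β = ∠CMA`, `γ = ∠AMB`.
By the angle bisector theorem and AM-GM, `|MA'| ≤ √(bc) cos (α/2)`, and similarly for `B'`, `C'`.
Since `M` is interior, `α + β + γ = 2π`; we use this only through the relation
`X² + Y² + Z² + 2XYZ = 1` between the half-angle cosines `X = cos (α/2)`, `Y`, `Z`, which follows
from the vanishing of the Gram determinant of `A - M`, `B - M`, `C - M` in the plane together with
the sign of `1 + cos α + cos β + cos γ` forced by a positive relation between these vectors.
The theorem is then the embedding inequality `x² + y² + z² ≥ 2(yzX + zxY + xyZ)` at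
`x = √a`, `y = √b`, `z = √c`.
-/

open EuclideanGeometry InnerProductGeometry RealInnerProductSpace Real Set

/-- The embedding inequality `x² + y² + z² ≥ 2(yz cos A + zx cos B + xy cos C)` for `A + B + C = π`,
with the cosines described by the identity they satisfy. -/
theorem two_mul_add_mul_add_mul_le_sq_add_sq_add_sq {x y z X Y Z : ℝ} (hX : 0 ≤ X) (hY : 0 ≤ Y)
    (hZ : 0 ≤ Z) (hY₁ : Y ≤ 1) (hZ₁ : Z ≤ 1) (h : X ^ 2 + Y ^ 2 + Z ^ 2 + 2 * X * Y * Z = 1) :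
    2 * (y * z * X + z * x * Y + x * y * Z) ≤ x ^ 2 + y ^ 2 + z ^ 2 := by
  -- `s` and `t` play the roles of `sin C` and `sin B`, and `hst` says `cos A = -cos (B + C)`.
  obtain ⟨s, hs₀, hs⟩ : ∃ s, 0 ≤ s ∧ s ^ 2 = 1 - Z ^ 2 :=
    ⟨√(1 - Z ^ 2), sqrt_nonneg _, sq_sqrt (by nlinarith)⟩
  obtain ⟨t, ht₀, ht⟩ : ∃ t, 0 ≤ t ∧ t ^ 2 = 1 - Y ^ 2 :=
    ⟨√(1 - Y ^ 2), sqrt_nonneg _, sq_sqrt (by nlinarith)⟩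
  have hst : s * t = X + Y * Z :=
    (pow_left_inj₀ (by positivity) (by positivity) two_ne_zero).1 (by
      rw [mul_pow, hs, ht]; linear_combination -h)
  have hsos : x ^ 2 + y ^ 2 + z ^ 2 - 2 * (y * z * X + z * x * Y + x * y * Z)
      = (x - y * Z - z * Y) ^ 2 + (y * s - z * t) ^ 2 := by
    linear_combination (-y ^ 2) * hs - z ^ 2 * ht + 2 * y * z * hst
  linarith [sq_nonneg (x - y * Z - z * Y), sq_nonneg (y * s - z * t)]

theorem Real.cos_half_sq_add_cos_half_sq_add_cos_half_sq {α β γ : ℝ} (hα : α ∈ Icc (-π) π)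
    (hβ : β ∈ Icc (-π) π) (hγ : γ ∈ Icc (-π) π)
    (hG : cos α ^ 2 + cos β ^ 2 + cos γ ^ 2 = 1 + 2 * cos α * cos β * cos γ)
    (hS : 1 + cos α + cos β + cos γ ≤ 0) :
    cos (α / 2) ^ 2 + cos (β / 2) ^ 2 + cos (γ / 2) ^ 2
      + 2 * cos (α / 2) * cos (β / 2) * cos (γ / 2) = 1 := by
  have hsq (θ : ℝ) : cos (θ / 2) ^ 2 = (1 + cos θ) / 2 := by
    rw [cos_sq, mul_div_cancel₀ _ two_ne_zero]; ring
  have hnonneg {θ : ℝ} (hθ : θ ∈ Icc (-π) π) : 0 ≤ cos (θ / 2) :=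
    cos_nonneg_of_mem_Icc ⟨by linarith [hθ.1], by linarith [hθ.2]⟩
  have hprod : cos (α / 2) * cos (β / 2) * cos (γ / 2) = -(1 + cos α + cos β + cos γ) / 4 := by
    have := hnonneg hα; have := hnonneg hβ; have := hnonneg hγ
    refine (pow_left_inj₀ (by positivity) (by linarith) two_ne_zero).1 ?_
    rw [mul_pow, mul_pow, hsq, hsq, hsq]
    linear_combination -hG / 16
  rw [hsq, hsq, hsq]
  linear_combination 2 * hprod

namespace InnerProductGeometry

variable {V : Type*} [NormedAddCommGroup V] [InnerProductSpace ℝ V]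

theorem cos_angle_div_two_nonneg (x y : V) : 0 ≤ cos (angle x y / 2) :=
  cos_nonneg_of_mem_Icc ⟨by linarith [pi_pos, angle_nonneg x y], by linarith [angle_le_pi x y]⟩

/-- The angle bisector theorem. -/
theorem mul_norm_eq_mul_norm_of_angle_eq_s8 {x y : V} {s t : ℝ} (hs : 0 ≤ s) (ht : 0 ≤ t)
    (hxy : ⟪x, y⟫ < ‖x‖ * ‖y‖) (h : angle x (s • x + t • y) = angle y (s • x + t • y)) :
    s * ‖x‖ = t * ‖y‖ := by
  set z := s • x + t • y with hz
  by_cases hz0 : z = 0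
  · have := congrArg norm (eq_neg_of_add_eq_zero_left hz0)
    rwa [norm_neg, norm_smul, norm_smul, norm_of_nonneg hs, norm_of_nonneg ht] at this
  have hx : x ≠ 0 := by rintro rfl; simp at hxy
  have hy : y ≠ 0 := by rintro rfl; simp at hxy
  have hcos := congrArg Real.cos h
  rw [cos_angle, cos_angle, div_eq_div_iff (by positivity) (by positivity)] at hcos
  have hxz : ⟪x, z⟫ = s * ‖x‖ ^ 2 + t * ⟪x, y⟫ := by
    rw [hz, inner_add_right, real_inner_smul_right, real_inner_smul_right,
      real_inner_self_eq_norm_sq]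
  have hyz : ⟪y, z⟫ = s * ⟪x, y⟫ + t * ‖y‖ ^ 2 := by
    rw [hz, inner_add_right, real_inner_smul_right, real_inner_smul_right,
      real_inner_self_eq_norm_sq, real_inner_comm]
  have hfactor : (‖x‖ * ‖y‖ - ⟪x, y⟫) * (s * ‖x‖ - t * ‖y‖) * ‖z‖ = 0 := by
    rw [hxz, hyz] at hcos; linear_combination hcos
  rcases mul_eq_zero.1 hfactor with h | h
  · rcases mul_eq_zero.1 h with h | h
    · linarith
    · linarith
  · simp [hz0] at h

theorem norm_le_sqrt_mul_cos_half_angle_of_angle_eq {x y z : V} (hxy : ⟪x, y⟫ < ‖x‖ * ‖y‖)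
    (hz : z ∈ segment ℝ x y) (h : angle x z = angle y z) :
    ‖z‖ ≤ √(‖x‖ * ‖y‖) * cos (angle x y / 2) := by
  obtain ⟨s, t, hs, ht, hst, rfl⟩ := hz
  have hx : x ≠ 0 := by rintro rfl; simp at hxy
  have hy : y ≠ 0 := by rintro rfl; simp at hxy
  have hbis := mul_norm_eq_mul_norm_of_angle_eq_s8 hs ht hxy h
  have hnorm : ‖s • x + t • y‖ ^ 2 = 4 * (s * t) * (‖x‖ * ‖y‖ * cos (angle x y / 2) ^ 2) := by
    rw [cos_sq, mul_div_cancel₀ _ two_ne_zero, cos_angle, ← real_inner_self_eq_norm_sq]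
    simp only [inner_add_left, inner_add_right, real_inner_smul_left, real_inner_smul_right,
      real_inner_self_eq_norm_sq, real_inner_comm y x, norm_smul, norm_eq_abs, mul_pow, sq_abs]
    field_simp
    linear_combination 2 * (s * ‖x‖ - t * ‖y‖) * hbis
  have hst4 : 4 * (s * t) ≤ 1 := by nlinarith [sq_nonneg (s - t)]
  have hcos := cos_angle_div_two_nonneg x y
  refine (pow_le_pow_iff_left₀ (norm_nonneg _) (by positivity) two_ne_zero).1 ?_
  rw [hnorm, mul_pow, sq_sqrt (by positivity)]
  exact mul_le_of_le_one_left (by positivity) hst4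

/-- Three vectors in a plane have vanishing Gram determinant. -/
theorem sum_norm_sq_mul_inner_sq_eq_of_finrank_eq_two [Fact (Module.finrank ℝ V = 2)]
    (x y z : V) :
    ‖x‖ ^ 2 * ⟪y, z⟫ ^ 2 + ‖y‖ ^ 2 * ⟪z, x⟫ ^ 2 + ‖z‖ ^ 2 * ⟪x, y⟫ ^ 2
      = ‖x‖ ^ 2 * ‖y‖ ^ 2 * ‖z‖ ^ 2 + 2 * ⟪y, z⟫ * ⟪z, x⟫ * ⟪x, y⟫ := by
  rcases eq_or_ne x 0 with rfl | hx
  · simp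
  have : FiniteDimensional ℝ V := .of_fact_finrank_eq_two
  let o : Orientation ℝ V (Fin 2) := (Module.finBasisOfFinrankEq ℝ V Fact.out).orientation
  have hyz := o.inner_mul_inner_add_areaForm_mul_areaForm x y z
  have hxy := o.inner_sq_add_areaForm_sq x y
  have hxz := o.inner_sq_add_areaForm_sq x z
  refine mul_left_cancel₀ (pow_ne_zero 2 (norm_ne_zero_iff.2 hx)) ?_
  rw [real_inner_comm x z]
  linear_combination (⟪x, y⟫ * ⟪x, z⟫ - ‖x‖ ^ 2 * ⟪y, z⟫ - o.areaForm x y * o.areaForm x z) * hyz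
    + o.areaForm x z ^ 2 * hxy + (‖x‖ ^ 2 * ‖y‖ ^ 2 - ⟪x, y⟫ ^ 2) * hxz

theorem cos_angle_sq_add_cos_angle_sq_add_cos_angle_sq [Fact (Module.finrank ℝ V = 2)]
    {x y z : V} (hx : x ≠ 0) (hy : y ≠ 0) (hz : z ≠ 0) :
    cos (angle y z) ^ 2 + cos (angle z x) ^ 2 + cos (angle x y) ^ 2
      = 1 + 2 * cos (angle y z) * cos (angle z x) * cos (angle x y) := by
  have := norm_ne_zero_iff.2 hx; have := norm_ne_zero_iff.2 hy; have := norm_ne_zero_iff.2 hz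
  simp only [cos_angle]
  field_simp
  linear_combination sum_norm_sq_mul_inner_sq_eq_of_finrank_eq_two x y z

theorem one_add_cos_angle_add_cos_angle_add_cos_angle_nonpos_of_add_eq_zero {x y z : V}
    (hx : x ≠ 0) (hy : y ≠ 0) (hz : z ≠ 0) (h : x + y + z = 0) :
    1 + cos (angle y z) + cos (angle z x) + cos (angle x y) ≤ 0 := by
  have hx' : x = -(y + z) := by linear_combination (norm := module) h
  have hy' : y = -(z + x) := by linear_combination (norm := module) h
  have hz' : z = -(x + y) := by linear_combination (norm := module) h
  have ha : ‖x‖ ≤ ‖y‖ + ‖z‖ := by rw [hx', norm_neg]; exact norm_add_le y z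
  have hb : ‖y‖ ≤ ‖z‖ + ‖x‖ := by rw [hy', norm_neg]; exact norm_add_le z x
  have hc : ‖z‖ ≤ ‖x‖ + ‖y‖ := by rw [hz', norm_neg]; exact norm_add_le x y
  have hyz : ⟪y, z⟫ = (‖x‖ ^ 2 - ‖y‖ ^ 2 - ‖z‖ ^ 2) / 2 := by
    rw [hx', norm_neg, norm_add_sq_real]; ring
  have hzx : ⟪z, x⟫ = (‖y‖ ^ 2 - ‖z‖ ^ 2 - ‖x‖ ^ 2) / 2 := by
    rw [hy', norm_neg, norm_add_sq_real]; ring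
  have hxy : ⟪x, y⟫ = (‖z‖ ^ 2 - ‖x‖ ^ 2 - ‖y‖ ^ 2) / 2 := by
    rw [hz', norm_neg, norm_add_sq_real]; ring
  have hx0 := norm_pos_iff.2 hx
  have hy0 := norm_pos_iff.2 hy
  have hz0 := norm_pos_iff.2 hz
  have key : 1 + cos (angle y z) + cos (angle z x) + cos (angle x y) =
      -((‖y‖ + ‖z‖ - ‖x‖) * (‖z‖ + ‖x‖ - ‖y‖) * (‖x‖ + ‖y‖ - ‖z‖) / (2 * ‖x‖ * ‖y‖ * ‖z‖)) := by
    rw [cos_angle, cos_angle, cos_angle, hyz, hzx, hxy]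
    field_simp
    ring
  rw [key, neg_nonpos]
  have := mul_nonneg (mul_nonneg (sub_nonneg.2 ha) (sub_nonneg.2 hb)) (sub_nonneg.2 hc)
  positivity

theorem one_add_cos_angle_add_cos_angle_add_cos_angle_nonpos {x y z : V} (hx : x ≠ 0)
    (hy : y ≠ 0) (hz : z ≠ 0) {l m n : ℝ} (hl : 0 < l) (hm : 0 < m) (hn : 0 < n)
    (h : l • x + m • y + n • z = 0) :
    1 + cos (angle y z) + cos (angle z x) + cos (angle x y) ≤ 0 := by
  simpa only [angle_smul_left_of_pos, angle_smul_right_of_pos, hl, hm, hn] using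
    one_add_cos_angle_add_cos_angle_add_cos_angle_nonpos_of_add_eq_zero (smul_ne_zero hl.ne' hx)
      (smul_ne_zero hm.ne' hy) (smul_ne_zero hn.ne' hz) h

end InnerProductGeometry

theorem EuclideanGeometry.dist_le_sqrt_mul_cos_half_angle_of_angle_eq {V : Type*}
    [NormedAddCommGroup V] [InnerProductSpace ℝ V] {B M C A' : V}
    (hBMC : ¬ Collinear ℝ {B, M, C}) (hA' : A' ∈ segment ℝ B C) (h : ∠ B M A' = ∠ C M A') :
    dist M A' ≤ √(dist M B * dist M C) * cos (∠ B M C / 2) := by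
  have hB : B -ᵥ M ≠ 0 := vsub_ne_zero.2 (ne₁₂_of_not_collinear hBMC)
  have hC : C -ᵥ M ≠ 0 := vsub_ne_zero.2 (ne₂₃_of_not_collinear hBMC).symm
  have hlt : ⟪B -ᵥ M, C -ᵥ M⟫ < ‖B -ᵥ M‖ * ‖C -ᵥ M‖ :=
    lt_of_le_of_ne (real_inner_le_norm _ _)
      (mt (inner_eq_mul_norm_iff_angle_eq_zero hB hC).1 (angle_ne_zero_of_not_collinear hBMC))
  have hseg : A' -ᵥ M ∈ segment ℝ (B -ᵥ M) (C -ᵥ M) := by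
    simpa only [vsub_eq_sub, sub_eq_neg_add, mem_segment_translate] using hA'
  rw [dist_comm M, dist_comm M, dist_comm M, dist_eq_norm_vsub V, dist_eq_norm_vsub V,
    dist_eq_norm_vsub V]
  exact norm_le_sqrt_mul_cos_half_angle_of_angle_eq hlt hseg h

theorem exists_pos_smul_sub_add_eq_zero_of_mem_interior_convexHull {E : Type*}
    [NormedAddCommGroup E] [NormedSpace ℝ E] {A B C M : E}
    (hABC : AffineIndependent ℝ ![A, B, C]) (hM : M ∈ interior (convexHull ℝ {A, B, C})) :
    ∃ l m n : ℝ, 0 < l ∧ 0 < m ∧ 0 < n ∧ l • (A - M) + m • (B - M) + n • (C - M) = 0 := by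
  have hrange : range ![A, B, C] = {A, B, C} := by
    simp only [Matrix.range_cons, Matrix.range_empty, union_empty, singleton_union]
  let b : AffineBasis (Fin 3) ℝ E :=
    ⟨![A, B, C], hABC, hrange ▸ affineSpan_eq_top_of_nonempty_interior ⟨M, hM⟩⟩
  rw [← hrange, show ![A, B, C] = b from rfl, b.interior_convexHull] at hM
  refine ⟨b.coord 0 M, b.coord 1 M, b.coord 2 M, hM 0, hM 1, hM 2, ?_⟩
  have hsum := b.sum_coord_apply_eq_one M
  have hcomb := b.linear_combination_coord_eq_self M
  rw [Fin.sum_univ_three] at hsum hcomb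
  change b.coord 0 M • A + b.coord 1 M • B + b.coord 2 M • C = M at hcomb
  calc _ = (b.coord 0 M • A + b.coord 1 M • B + b.coord 2 M • C)
        - (b.coord 0 M + b.coord 1 M + b.coord 2 M) • M := by module
    _ = 0 := by rw [hcomb, hsum, one_smul, sub_self]

theorem collinear_of_smul_sub_add_eq_zero {E : Type*} [AddCommGroup E] [Module ℝ E]
    {A B C M : E} {l m n : ℝ} (hl : l ≠ 0) (h : l • (A - M) + m • (B - M) + n • (C - M) = 0)
    (hBMC : Collinear ℝ {B, M, C}) : Collinear ℝ {A, B, C} := by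
  have hA : A ∈ affineSpan ℝ {B, M, C} := by
    have hAM : A = (-(m / l)) • (B - M) + (-(n / l)) • (C - M) + M := by
      apply smul_right_injective E hl
      simp only [smul_add, smul_smul]
      field_simp
      linear_combination (norm := module) h
    rw [hAM, ← vsub_eq_sub B M, ← vsub_eq_sub C M, ← vadd_eq_add]
    refine AffineSubspace.vadd_mem_of_mem_direction ?_ (mem_affineSpan ℝ (by simp))
    rw [direction_affineSpan]
    exact add_mem (Submodule.smul_mem _ _ (vsub_mem_vectorSpan ℝ (by simp) (by simp)))
      (Submodule.smul_mem _ _ (vsub_mem_vectorSpan ℝ (by simp) (by simp)))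
  exact (collinear_insert_iff_of_mem_affineSpan hA).2 hBMC |>.subset (by
    intro p; simp only [mem_insert_iff, mem_singleton_iff]; tauto)

theorem statement8 (A B C M A' B' C' : EuclideanSpace ℝ (Fin 2))
    (hABC : AffineIndependent ℝ ![A, B, C])
    (hM : M ∈ interior (convexHull ℝ ({A, B, C} : Set (EuclideanSpace ℝ (Fin 2)))))
    (hA' : A' ∈ segment ℝ B C) (ha : ∠ B M A' = ∠ C M A')
    (hB' : B' ∈ segment ℝ C A) (hb : ∠ C M B' = ∠ A M B')
    (hC' : C' ∈ segment ℝ A B) (hc : ∠ A M C' = ∠ B M C') :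
    dist M A + dist M B + dist M C ≥ 2 * (dist M A' + dist M B' + dist M C') := by
  have : Fact (Module.finrank ℝ (EuclideanSpace ℝ (Fin 2)) = 2) := ⟨finrank_euclideanSpace_fin⟩
  have hABC' : ¬ Collinear ℝ {A, B, C} := affineIndependent_iff_not_collinear_set.1 hABC
  obtain ⟨l, m, n, hl, hm, hn, hlmn⟩ :=
    exists_pos_smul_sub_add_eq_zero_of_mem_interior_convexHull hABC hM
  have hBMC : ¬ Collinear ℝ {B, M, C} := mt (collinear_of_smul_sub_add_eq_zero hl.ne' hlmn) hABC'
  have hCMA : ¬ Collinear ℝ {C, M, A} :=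
    mt (collinear_of_smul_sub_add_eq_zero (A := B) (B := C) (C := A) (m := n) (n := l) hm.ne'
      (by linear_combination (norm := module) hlmn)) (by rwa [pair_comm C A, insert_comm B A])
  have hAMB : ¬ Collinear ℝ {A, M, B} :=
    mt (collinear_of_smul_sub_add_eq_zero (A := C) (B := A) (C := B) (m := l) (n := m) hn.ne'
      (by linear_combination (norm := module) hlmn)) (by rwa [insert_comm C A, pair_comm C B])
  have hA : A -ᵥ M ≠ 0 := vsub_ne_zero.2 (ne₁₂_of_not_collinear hAMB)
  have hB : B -ᵥ M ≠ 0 := vsub_ne_zero.2 (ne₁₂_of_not_collinear hBMC)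
  have hC : C -ᵥ M ≠ 0 := vsub_ne_zero.2 (ne₁₂_of_not_collinear hCMA)
  have hangle (p q r : EuclideanSpace ℝ (Fin 2)) : ∠ p q r ∈ Icc (-π) π :=
    ⟨by linarith [angle_nonneg p q r, pi_pos], angle_le_pi p q r⟩
  have hhalf := cos_half_sq_add_cos_half_sq_add_cos_half_sq (hangle B M C) (hangle C M A)
    (hangle A M B) (cos_angle_sq_add_cos_angle_sq_add_cos_angle_sq hA hB hC)
    (one_add_cos_angle_add_cos_angle_add_cos_angle_nonpos hA hB hC hl hm hn hlmn)
  have hsum := two_mul_add_mul_add_mul_le_sq_add_sq_add_sq (x := √(dist M A))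
    (y := √(dist M B)) (z := √(dist M C)) (X := cos (∠ B M C / 2)) (Y := cos (∠ C M A / 2))
    (Z := cos (∠ A M B / 2)) (cos_angle_div_two_nonneg _ _) (cos_angle_div_two_nonneg _ _)
    (cos_angle_div_two_nonneg _ _) (cos_le_one _) (cos_le_one _) hhalf
  have hA' := dist_le_sqrt_mul_cos_half_angle_of_angle_eq hBMC hA' ha
  have hB' := dist_le_sqrt_mul_cos_half_angle_of_angle_eq hCMA hB' hb
  have hC' := dist_le_sqrt_mul_cos_half_angle_of_angle_eq hAMB hC' hc
  rw [sq_sqrt dist_nonneg, sq_sqrt dist_nonneg, sq_sqrt dist_nonneg] at hsum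
  rw [sqrt_mul dist_nonneg] at hA' hB' hC'
  linarith
end

section
/- (Lu's Barrow-type inequality.) Let A, B, C be affinely independent points of the Euclidean plane and let M be a point of the interior of the triangle ABC (the interior of the convex hull of {A, B, C}). Write R_A = |MA|, R_B = |MB|, R_C = |MC|. Let A' ∈ [B, C] with ∠BMA' = ∠CMA', let B' ∈ [C, A] with ∠CMB' = ∠AMB', and let C' ∈ [A, B] with ∠AMC' = ∠BMC', and write ℓ_a = |MA'|, ℓ_b = |MB'|, ℓ_c = |MC'|. Then R_A + R_B + R_C ≥ (√(R_C/R_B) + √(R_B/R_C))·ℓ_a + (√(R_C/R_A) + √(R_A/R_C))·ℓ_b + (√(R_A/R_B) + √(R_B/R_A))·ℓ_c. -/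
/-!
Every term on the right is computed exactly. By the angle bisector theorem the bisector from `M`
in the triangle `P M Q` has length `2 · MP · MQ · cos (θ / 2) / (MP + MQ)`, `θ = ∠ P M Q`, so
`(√(MQ/MP) + √(MP/MQ)) · ℓ = 2 √MP √MQ cos (θ / 2)`. As `M` is interior, the oriented angles
`∡ A M B`, `∡ B M C`, `∡ C M A` share the sign of the triangle, so the three angles at `M` add up
to `2π` and their halves to `π`. With `x = √R_A`, `y = √R_B`, `z = √R_C` the claim becomes the
embedding inequality `2yz cos α + 2zx cos β + 2xy cos γ ≤ x² + y² + z²` for `α + β + γ = π`,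
whose defect is a sum of two squares.
-/

open EuclideanGeometry Real Module
open scoped RealInnerProductSpace

theorem Real.two_mul_cos_add_two_mul_cos_add_two_mul_cos_le {α β γ : ℝ} (h : α + β + γ = π)
    (x y z : ℝ) :
    2 * y * z * cos α + 2 * z * x * cos β + 2 * x * y * cos γ ≤ x ^ 2 + y ^ 2 + z ^ 2 := by
  have hα : cos α = sin β * sin γ - cos β * cos γ := by
    rw [show α = π - (β + γ) by linarith, cos_pi_sub, cos_add]; ring
  rw [hα]
  nlinarith [sq_nonneg (x - y * cos γ - z * cos β), sq_nonneg (y * sin γ - z * sin β),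
    sin_sq_add_cos_sq β, sin_sq_add_cos_sq γ]

theorem Real.sqrt_div_add_sqrt_div {a b : ℝ} (ha : 0 < a) (hb : 0 < b) :
    √(b / a) + √(a / b) = (a + b) / (√a * √b) := by
  have ha' := sqrt_pos.2 ha
  have hb' := sqrt_pos.2 hb
  rw [sqrt_div hb.le, sqrt_div ha.le]
  field_simp
  rw [sq_sqrt ha.le, sq_sqrt hb.le, add_comm]

namespace InnerProductGeometry

variable {V : Type*} [NormedAddCommGroup V] [InnerProductSpace ℝ V]

theorem inner_mul_norm_eq_of_angle_eq {p q w : V} (h : angle p w = angle q w) :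
    ⟪p, w⟫ * ‖q‖ = ⟪q, w⟫ * ‖p‖ := by
  rcases eq_or_ne p 0 with rfl | hp
  · simp
  rcases eq_or_ne q 0 with rfl | hq
  · simp
  rcases eq_or_ne w 0 with rfl | hw
  · simp
  have hcos := congrArg Real.cos h
  rw [cos_angle, cos_angle, div_eq_div_iff (by positivity) (by positivity)] at hcos
  have hw' : ‖w‖ ≠ 0 := norm_ne_zero_iff.2 hw
  apply mul_right_cancel₀ hw'
  linear_combination hcos

theorem norm_add_norm_mul_norm_eq_of_angle_eq {p q w : V} (hp : p ≠ 0) (hq : q ≠ 0)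
    (hpq : angle p q ≠ 0) (hw : w ∈ segment ℝ p q) (h : angle p w = angle q w) :
    (‖p‖ + ‖q‖) * ‖w‖ = 2 * ‖p‖ * ‖q‖ * cos (angle p q / 2) := by
  obtain ⟨s, t, -, -, hst, rfl⟩ := hw
  have hinner : ⟪p, q⟫ < ‖p‖ * ‖q‖ :=
    (real_inner_le_norm p q).lt_of_ne ((inner_eq_mul_norm_iff_angle_eq_zero hp hq).not.2 hpq)
  have hcross := inner_mul_norm_eq_of_angle_eq h
  simp only [inner_add_right, real_inner_smul_right, real_inner_self_eq_norm_sq,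
    real_inner_comm p q] at hcross
  -- the bisector divides the opposite side in the ratio of the adjacent sides
  have hratio : s * ‖p‖ = t * ‖q‖ := by
    have : (‖p‖ * ‖q‖ - ⟪p, q⟫) * (s * ‖p‖ - t * ‖q‖) = 0 := by linear_combination hcross
    have hne : ‖p‖ * ‖q‖ - ⟪p, q⟫ ≠ 0 := by linarith
    linarith [(mul_eq_zero.1 this).resolve_left hne]
  have hnorm : ‖s • p + t • q‖ ^ 2 = s ^ 2 * ‖p‖ ^ 2 + 2 * s * t * ⟪p, q⟫ + t ^ 2 * ‖q‖ ^ 2 := by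
    rw [norm_add_sq_real, norm_smul, norm_smul, real_inner_smul_left, real_inner_smul_right,
      mul_pow, mul_pow, Real.norm_eq_abs, Real.norm_eq_abs, sq_abs, sq_abs]
    ring
  have hcos : ‖p‖ * ‖q‖ * cos (angle p q) = ⟪p, q⟫ := by
    rw [cos_angle]; field_simp
  have hhalf : 0 ≤ cos (angle p q / 2) :=
    cos_nonneg_of_mem_Icc ⟨by linarith [pi_pos, angle_nonneg p q],
      by linarith [angle_le_pi p q]⟩
  refine (pow_left_inj₀ (by positivity) (by positivity) two_ne_zero).1 ?_
  have hs : s * (‖p‖ + ‖q‖) = ‖q‖ := by linear_combination hratio + ‖q‖ * hst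
  have ht : t * (‖p‖ + ‖q‖) = ‖p‖ := by linear_combination -hratio + ‖p‖ * hst
  have hcos_sq : cos (angle p q / 2) ^ 2 = (1 + cos (angle p q)) / 2 := by
    rw [cos_sq, mul_div_cancel₀ _ two_ne_zero]; ring
  calc ((‖p‖ + ‖q‖) * ‖s • p + t • q‖) ^ 2
      = (s * (‖p‖ + ‖q‖)) ^ 2 * ‖p‖ ^ 2 + 2 * (s * (‖p‖ + ‖q‖)) * (t * (‖p‖ + ‖q‖)) * ⟪p, q⟫
          + (t * (‖p‖ + ‖q‖)) ^ 2 * ‖q‖ ^ 2 := by rw [mul_pow, hnorm]; ring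
    _ = (2 * ‖p‖ * ‖q‖ * cos (angle p q / 2)) ^ 2 := by
      rw [hs, ht, mul_pow, hcos_sq, ← hcos]; ring

end InnerProductGeometry

namespace EuclideanGeometry

section Bisector

variable {V P : Type*} [NormedAddCommGroup V] [InnerProductSpace ℝ V] [MetricSpace P]
  [NormedAddTorsor V P]

theorem dist_add_dist_mul_dist_eq_of_angle_eq {M P₁ P₂ X : P}
    (h : ¬Collinear ℝ {P₁, M, P₂}) (hX : Wbtw ℝ P₁ X P₂) (hbis : ∠ P₁ M X = ∠ P₂ M X) :
    (dist M P₁ + dist M P₂) * dist M X = 2 * dist M P₁ * dist M P₂ * cos (∠ P₁ M P₂ / 2) := by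
  simp only [dist_eq_norm_vsub' V]
  exact InnerProductGeometry.norm_add_norm_mul_norm_eq_of_angle_eq
    (vsub_ne_zero.2 (ne₁₂_of_not_collinear h)) (vsub_ne_zero.2 (ne₂₃_of_not_collinear h).symm)
    (angle_ne_zero_of_not_collinear h) (mem_segment_iff_wbtw.2 (hX.vsub_const M)) hbis

theorem sqrt_div_add_sqrt_div_mul_dist_eq_of_angle_eq {M P₁ P₂ X : P}
    (h : ¬Collinear ℝ {P₁, M, P₂}) (hX : Wbtw ℝ P₁ X P₂) (hbis : ∠ P₁ M X = ∠ P₂ M X) :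
    (√(dist M P₂ / dist M P₁) + √(dist M P₁ / dist M P₂)) * dist M X =
      2 * √(dist M P₁) * √(dist M P₂) * cos (∠ P₁ M P₂ / 2) := by
  have h₁ : 0 < dist M P₁ := dist_pos.2 (ne₁₂_of_not_collinear h).symm
  have h₂ : 0 < dist M P₂ := dist_pos.2 (ne₂₃_of_not_collinear h)
  have h₁' := sqrt_pos.2 h₁
  have h₂' := sqrt_pos.2 h₂
  rw [sqrt_div_add_sqrt_div h₁ h₂, div_mul_eq_mul_div,
    dist_add_dist_mul_dist_eq_of_angle_eq h hX hbis, div_eq_iff (by positivity)]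
  nth_rw 1 [← mul_self_sqrt h₁.le, ← mul_self_sqrt h₂.le]
  ring

end Bisector

section Oriented

variable {V P : Type*} [NormedAddCommGroup V] [InnerProductSpace ℝ V] [MetricSpace P]
  [NormedAddTorsor V P] [Fact (finrank ℝ V = 2)] [Module.Oriented ℝ V (Fin 2)]

theorem angle_add_angle_add_angle_eq_two_pi_of_oangle_sign_eq {A B C M : P}
    (hAB : (∡ A M B).sign = (∡ B M C).sign) (hBC : (∡ B M C).sign = (∡ C M A).sign)
    (h0 : (∡ A M B).sign ≠ 0) :
    ∠ A M B + ∠ B M C + ∠ C M A = 2 * π := by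
  have h0' : (∡ B M C).sign ≠ 0 := hAB ▸ h0
  have h0'' : (∡ C M A).sign ≠ 0 := hBC ▸ h0'
  have hcyc := oangle_add_cyc3 (left_ne_of_oangle_sign_ne_zero h0)
    (left_ne_of_oangle_sign_ne_zero h0') (left_ne_of_oangle_sign_ne_zero h0'')
  have hcoe : ((∠ A M B + ∠ B M C + ∠ C M A : ℝ) : Real.Angle) = 0 := by
    rcases (∡ A M B).sign.trichotomy with h | h | h
    · rwa [oangle_eq_neg_angle_of_sign_eq_neg_one h,
        oangle_eq_neg_angle_of_sign_eq_neg_one (hAB ▸ h),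
        oangle_eq_neg_angle_of_sign_eq_neg_one (hBC ▸ hAB ▸ h), ← neg_add, ← neg_add,
        neg_eq_zero] at hcyc
    · exact absurd h h0
    · rwa [oangle_eq_angle_of_sign_eq_one h, oangle_eq_angle_of_sign_eq_one (hAB ▸ h),
        oangle_eq_angle_of_sign_eq_one (hBC ▸ hAB ▸ h)] at hcyc
  obtain ⟨n, hn⟩ := Real.Angle.coe_eq_zero_iff.1 hcoe
  rw [zsmul_eq_mul] at hn
  have bounds {X Y : P} (h : (∡ X M Y).sign ≠ 0) : 0 < ∠ X M Y ∧ ∠ X M Y < π :=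
    have h' := oangle_sign_eq_zero_iff_collinear.not.1 h
    ⟨angle_pos_of_not_collinear h', angle_lt_pi_of_not_collinear h'⟩
  obtain ⟨h1, h1'⟩ := bounds h0
  obtain ⟨h2, h2'⟩ := bounds h0'
  obtain ⟨h3, h3'⟩ := bounds h0''
  have hn1 : n = 1 := by
    have hpos : (0 : ℝ) < n := by nlinarith [pi_pos]
    have hlt : (n : ℝ) < 2 := by nlinarith [pi_pos]
    have : (0 : ℤ) < n ∧ n < 2 := ⟨by exact_mod_cast hpos, by exact_mod_cast hlt⟩
    omega
  rw [← hn, hn1]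
  ring

theorem oangle_sign_eq_sign_mul_oangle_sign_of_smul_add_smul_add_smul {A B C M : V}
    {a b c : ℝ} (habc : a + b + c = 1) (hM : a • A + b • B + c • C = M) :
    (∡ A M B).sign = SignType.sign c * (∡ B A C).sign := by
  obtain rfl : a = 1 - b - c := by linarith
  have hA : A - M = (-b) • (B - A) + (-c) • (C - A) := by rw [← hM]; module
  have hB : B - M = (1 - b) • (B - A) + (-c) • (C - A) := by rw [← hM]; module
  simp only [oangle, vsub_eq_sub]
  rw [hA, hB, Orientation.oangle_sign_smul_add_smul_smul_add_smul,
    show -b * -c - -c * (1 - b) = c by ring]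

end Oriented

section TwoDim

variable {V : Type*} [NormedAddCommGroup V] [InnerProductSpace ℝ V] [Fact (finrank ℝ V = 2)]

attribute [local instance] FiniteDimensional.of_fact_finrank_eq_two

theorem exists_pos_smul_add_smul_add_smul_eq_of_mem_interior_convexHull {A B C M : V}
    (hABC : AffineIndependent ℝ ![A, B, C]) (hM : M ∈ interior (convexHull ℝ {A, B, C})) :
    ∃ a b c : ℝ, 0 < a ∧ 0 < b ∧ 0 < c ∧ a + b + c = 1 ∧ a • A + b • B + c • C = M := by
  have hspan : affineSpan ℝ (Set.range ![A, B, C]) = ⊤ := by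
    rw [hABC.affineSpan_eq_top_iff_card_eq_finrank_add_one, Fintype.card_fin,
      (Fact.out : finrank ℝ V = 2)]
  let T : AffineBasis (Fin 3) ℝ V := ⟨![A, B, C], hABC, hspan⟩
  have hT : Set.range T = {A, B, C} := by
    show Set.range ![A, B, C] = _
    rw [Matrix.range_cons, Matrix.range_cons_cons_empty, Set.singleton_union]
  rw [← hT, T.interior_convexHull] at hM
  refine ⟨T.coord 0 M, T.coord 1 M, T.coord 2 M, hM 0, hM 1, hM 2, ?_, ?_⟩
  · simpa only [Fin.sum_univ_three] using T.sum_coord_apply_eq_one M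
  · have hcomb := T.linear_combination_coord_eq_self M
    rwa [Fin.sum_univ_three] at hcomb

theorem oangle_sign_eq_of_mem_interior_convexHull [Module.Oriented ℝ V (Fin 2)] {A B C M : V}
    (hABC : AffineIndependent ℝ ![A, B, C]) (hM : M ∈ interior (convexHull ℝ {A, B, C})) :
    (∡ B M C).sign = (∡ B A C).sign ∧ (∡ C M A).sign = (∡ B A C).sign ∧
      (∡ A M B).sign = (∡ B A C).sign := by
  obtain ⟨a, b, c, ha, hb, hc, habc, hcomb⟩ :=
    exists_pos_smul_add_smul_add_smul_eq_of_mem_interior_convexHull hABC hM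
  refine ⟨?_, ?_, ?_⟩
  · rw [oangle_sign_eq_sign_mul_oangle_sign_of_smul_add_smul_add_smul (a := b) (b := c) (c := a)
      (by linarith) (by rw [← hcomb]; abel), sign_pos ha, one_mul]
    exact (oangle_rotate_sign C B A).symm
  · rw [oangle_sign_eq_sign_mul_oangle_sign_of_smul_add_smul_add_smul (a := c) (b := a) (c := b)
      (by linarith) (by rw [← hcomb]; abel), sign_pos hb, one_mul]
    exact oangle_rotate_sign B A C
  · rw [oangle_sign_eq_sign_mul_oangle_sign_of_smul_add_smul_add_smul habc hcomb, sign_pos hc,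
      one_mul]

theorem oangle_sign_ne_zero_of_affineIndependent [Module.Oriented ℝ V (Fin 2)] {A B C : V}
    (hABC : AffineIndependent ℝ ![A, B, C]) : (∡ B A C).sign ≠ 0 := by
  rw [Ne, oangle_sign_eq_zero_iff_collinear, Set.insert_comm]
  exact affineIndependent_iff_not_collinear_set.1 hABC

theorem not_collinear_of_mem_interior_convexHull {A B C M : V}
    (hABC : AffineIndependent ℝ ![A, B, C]) (hM : M ∈ interior (convexHull ℝ {A, B, C})) :
    ¬Collinear ℝ {B, M, C} ∧ ¬Collinear ℝ {C, M, A} ∧ ¬Collinear ℝ {A, M, B} := by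
  let _ : Module.Oriented ℝ V (Fin 2) := ⟨(finBasisOfFinrankEq ℝ V Fact.out).orientation⟩
  obtain ⟨hBC, hCA, hAB⟩ := oangle_sign_eq_of_mem_interior_convexHull hABC hM
  have h0 := oangle_sign_ne_zero_of_affineIndependent hABC
  simp only [← oangle_sign_eq_zero_iff_collinear, hBC, hCA, hAB]
  exact ⟨h0, h0, h0⟩

theorem angle_add_angle_add_angle_eq_two_pi_of_mem_interior_convexHull {A B C M : V}
    (hABC : AffineIndependent ℝ ![A, B, C]) (hM : M ∈ interior (convexHull ℝ {A, B, C})) :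
    ∠ B M C + ∠ C M A + ∠ A M B = 2 * π := by
  let _ : Module.Oriented ℝ V (Fin 2) := ⟨(finBasisOfFinrankEq ℝ V Fact.out).orientation⟩
  obtain ⟨hBC, hCA, hAB⟩ := oangle_sign_eq_of_mem_interior_convexHull hABC hM
  exact angle_add_angle_add_angle_eq_two_pi_of_oangle_sign_eq (hBC.trans hCA.symm)
    (hCA.trans hAB.symm) (hBC ▸ oangle_sign_ne_zero_of_affineIndependent hABC)

end TwoDim

end EuclideanGeometry

theorem statement9 (A B C M A' B' C' : EuclideanSpace ℝ (Fin 2))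
    (hABC : AffineIndependent ℝ ![A, B, C])
    (hM : M ∈ interior (convexHull ℝ ({A, B, C} : Set (EuclideanSpace ℝ (Fin 2)))))
    (hA' : A' ∈ segment ℝ B C) (ha : ∠ B M A' = ∠ C M A')
    (hB' : B' ∈ segment ℝ C A) (hb : ∠ C M B' = ∠ A M B')
    (hC' : C' ∈ segment ℝ A B) (hc : ∠ A M C' = ∠ B M C') :
    dist M A + dist M B + dist M C ≥
      (Real.sqrt (dist M C / dist M B) + Real.sqrt (dist M B / dist M C)) * dist M A' +
      (Real.sqrt (dist M C / dist M A) + Real.sqrt (dist M A / dist M C)) * dist M B' +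
      (Real.sqrt (dist M A / dist M B) + Real.sqrt (dist M B / dist M A)) * dist M C' := by
  have : Fact (finrank ℝ (EuclideanSpace ℝ (Fin 2)) = 2) := ⟨finrank_euclideanSpace_fin⟩
  obtain ⟨hBMC, hCMA, hAMB⟩ := not_collinear_of_mem_interior_convexHull hABC hM
  have hsum := angle_add_angle_add_angle_eq_two_pi_of_mem_interior_convexHull hABC hM
  rw [sqrt_div_add_sqrt_div_mul_dist_eq_of_angle_eq hBMC (mem_segment_iff_wbtw.1 hA') ha,
    add_comm √(dist M C / dist M A),
    sqrt_div_add_sqrt_div_mul_dist_eq_of_angle_eq hCMA (mem_segment_iff_wbtw.1 hB') hb,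
    add_comm √(dist M A / dist M B),
    sqrt_div_add_sqrt_div_mul_dist_eq_of_angle_eq hAMB (mem_segment_iff_wbtw.1 hC') hc]
  have key := two_mul_cos_add_two_mul_cos_add_two_mul_cos_le
    (by linarith : ∠ B M C / 2 + ∠ C M A / 2 + ∠ A M B / 2 = π)
    √(dist M A) √(dist M B) √(dist M C)
  rwa [sq_sqrt dist_nonneg, sq_sqrt dist_nonneg, sq_sqrt dist_nonneg] at key
end

section
/- (Barrow-type inequality with signed angle bisectors.) Let A, B, C be affinely independent points of the Euclidean plane and let M be a point, distinct from A, B and C, whose barycentric coordinates (w_A, w_B, w_C) with respect to (A, B, C) satisfy w_A ≤ 0 or w_B ≤ 0 or w_C ≤ 0 (i.e. M does not lie in the open interior of the triangle ABC). Write R_A = |MA|, R_B = |MB|, R_C = |MC|, and let ℓ_a = (2·R_B·R_C/(R_B + R_C))·cos(∠BMC/2), ℓ_b = (2·R_C·R_A/(R_C + R_A))·cos(∠CMA/2), ℓ_c = (2·R_A·R_B/(R_A + R_B))·cos(∠AMB/2). Define the signed angle bisectors ℓ'_a = −ℓ_a if w_A < 0 and ℓ'_a = ℓ_a otherwise, ℓ'_b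 = −ℓ_b if w_B < 0 and ℓ'_b = ℓ_b otherwise, ℓ'_c = −ℓ_c if w_C < 0 and ℓ'_c = ℓ_c otherwise. Then R_A + R_B + R_C ≥ (√(R_C/R_B) + √(R_B/R_C))·ℓ'_a + (√(R_C/R_A) + √(R_A/R_C))·ℓ'_b + (√(R_A/R_B) + √(R_B/R_A))·ℓ'_c. -/
/-!
Since `(√(b/c) + √(c/b)) · 2bc/(b+c) = 2√(bc)`, the right-hand side is the sum of the terms
`±2 √(R_B R_C) cos (∠BMC / 2)`. If `w_A ≤ 0 ≤ w_B, w_C`, the ray from `M` through `A` meets the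
segment `BC`, so `∠BMC = ∠CMA + ∠AMB` (and `∠BMC = π` when `w_A = 0`, so the sign of the `A` term
does not matter). With `x = √R_A`, `y = √R_B`, `z = √R_C` the inequality becomes
`2zx cos β + 2xy cos γ - 2yz cos (β + γ) ≤ x² + y² + z²`, whose defect is
`(x - z cos β - y cos γ)² + (z sin β - y sin γ)²`. If two weights are negative, two terms are
nonpositive and the third is at most `R_B + R_C` by AM-GM.
-/

open EuclideanGeometry Real AffineMap

noncomputable def signedBarrowTerm (w b c θ : ℝ) : ℝ :=
  if w < 0 then -(2 * √b * √c * cos (θ / 2)) else 2 * √b * √c * cos (θ / 2)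

theorem sqrt_div_add_sqrt_div_mul_two_mul_div_add {b c : ℝ} (hb : 0 < b) (hc : 0 < c) :
    (√(b / c) + √(c / b)) * (2 * b * c / (b + c)) = 2 * √b * √c := by
  have hb' := sq_sqrt hb.le
  have hc' := sq_sqrt hc.le
  have hsb := sqrt_pos.2 hb
  have hsc := sqrt_pos.2 hc
  rw [sqrt_div hb.le, sqrt_div hc.le]
  field_simp
  rw [hb', hc']
  ring

theorem sqrt_div_add_sqrt_div_mul_ite {b c : ℝ} (hb : 0 < b) (hc : 0 < c) (w θ : ℝ) :
    (√(b / c) + √(c / b)) *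
        (if w < 0 then -(2 * b * c / (b + c) * cos (θ / 2))
          else 2 * b * c / (b + c) * cos (θ / 2)) =
      signedBarrowTerm w b c θ := by
  rw [signedBarrowTerm, ← sqrt_div_add_sqrt_div_mul_two_mul_div_add hb hc]
  split_ifs <;> ring

namespace signedBarrowTerm

variable {w b c θ : ℝ}

theorem le_add (hb : 0 ≤ b) (hc : 0 ≤ c) : signedBarrowTerm w b c θ ≤ b + c := by
  have hbc : 2 * √b * √c ≤ b + c := by
    nlinarith [sq_nonneg (√b - √c), sq_sqrt hb, sq_sqrt hc]
  have hcos := abs_le.1 (abs_cos_le_one (θ / 2))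
  have h0 : 0 ≤ 2 * √b * √c := by positivity
  unfold signedBarrowTerm
  split_ifs <;> nlinarith

theorem nonpos (hw : w < 0) (hθ₀ : 0 ≤ θ) (hθπ : θ ≤ π) : signedBarrowTerm w b c θ ≤ 0 := by
  have hcos : 0 ≤ cos (θ / 2) := cos_nonneg_of_mem_Icc ⟨by linarith [pi_pos], by linarith⟩
  rw [signedBarrowTerm, if_pos hw, neg_nonpos]
  positivity

theorem of_nonneg (hw : 0 ≤ w) : signedBarrowTerm w b c θ = 2 * √b * √c * cos (θ / 2) :=
  if_neg hw.not_gt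

theorem of_nonpos (hw : w ≤ 0) (hθ : w = 0 → θ = π) :
    signedBarrowTerm w b c θ = -(2 * √b * √c * cos (θ / 2)) := by
  rcases hw.lt_or_eq with hw | hw
  · exact if_pos hw
  · rw [of_nonneg hw.ge, hθ hw, cos_pi_div_two]
    ring

end signedBarrowTerm

theorem two_mul_cos_add_two_mul_cos_sub_two_mul_cos_add_le (x y z β γ : ℝ) :
    2 * z * x * cos β + 2 * x * y * cos γ - 2 * y * z * cos (β + γ) ≤ x ^ 2 + y ^ 2 + z ^ 2 := by
  have key : x ^ 2 + y ^ 2 + z ^ 2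
      - (2 * z * x * cos β + 2 * x * y * cos γ - 2 * y * z * cos (β + γ))
      = (x - z * cos β - y * cos γ) ^ 2 + (z * sin β - y * sin γ) ^ 2 := by
    rw [cos_add]
    linear_combination (-z ^ 2) * sin_sq_add_cos_sq β - y ^ 2 * sin_sq_add_cos_sq γ
  nlinarith [sq_nonneg (x - z * cos β - y * cos γ), sq_nonneg (z * sin β - y * sin γ)]

theorem cyclic_sign_cases {a b c : ℝ} (h : a ≤ 0 ∨ b ≤ 0 ∨ c ≤ 0) :
    (a ≤ 0 ∧ 0 ≤ b ∧ 0 ≤ c) ∨ (b ≤ 0 ∧ 0 ≤ c ∧ 0 ≤ a) ∨ (c ≤ 0 ∧ 0 ≤ a ∧ 0 ≤ b) ∨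
      (a < 0 ∧ b < 0) ∨ (b < 0 ∧ c < 0) ∨ (c < 0 ∧ a < 0) := by
  grind

section Barycentric

variable {V : Type*} [NormedAddCommGroup V] [InnerProductSpace ℝ V]
  {A B C M : V} {wA wB wC : ℝ}

theorem angle_eq_pi_of_barycentric (hw : wA + wB + wC = 1) (hM : M = wA • A + wB • B + wC • C)
    (hMB : M ≠ B) (hMC : M ≠ C) (hA : wA = 0) (hB : 0 ≤ wB) (hC : 0 ≤ wC) :
    ∠ B M C = π := by
  have hM' : M = lineMap B C wC := by
    rw [lineMap_apply_module, hM, hA, show 1 - wC = wB by linarith]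
    module
  have hBMC : Wbtw ℝ B M C := hM' ▸ ⟨wC, ⟨hC, by linarith⟩, rfl⟩
  exact Sbtw.angle₁₂₃_eq_pi ⟨hBMC, hMB, hMC⟩

theorem angle_add_angle_eq_of_barycentric (hw : wA + wB + wC = 1)
    (hM : M = wA • A + wB • B + wC • C) (hMB : M ≠ B) (hMC : M ≠ C)
    (hA : wA ≤ 0) (hB : 0 ≤ wB) (hC : 0 ≤ wC) :
    ∠ C M A + ∠ A M B = ∠ B M C := by
  rcases hA.lt_or_eq with hA | hA
  · rw [angle_comm C M A, angle_comm A M B, add_comm]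
    set t := 1 - wA
    have ht : 0 < t := by linarith
    set P := lineMap B C (wC / t) with hP
    have hBPC : Wbtw ℝ B P C :=
      ⟨wC / t, ⟨by positivity, (div_le_one ht).2 (by linarith)⟩, rfl⟩
    -- `M = wA • A + t • P`, so `P` lies on the ray from `M` through `A`.
    have hray : (-wA / t) • (A -ᵥ M) = P -ᵥ M := by
      rw [hP, lineMap_apply_module, hM, vsub_eq_sub, vsub_eq_sub,
        show wB = t - wC by linarith]
      match_scalars <;> field_simp <;> ring
    have hr : 0 < -wA / t := div_pos (by linarith) ht
    rw [← angle_smul_right_of_pos B hr hray, ← angle_smul_left_of_pos C hr hray]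
    exact angle_add_of_ne_of_ne hMB hMC hBPC
  · have hπ := angle_eq_pi_of_barycentric hw hM hMB hMC hA hB hC
    rw [hπ, angle_comm C M A, add_comm]
    exact angle_add_angle_eq_pi_of_angle_eq_pi A hπ

theorem signedBarrowTerm_sum_le_of_nonpos_of_nonneg (hw : wA + wB + wC = 1)
    (hM : M = wA • A + wB • B + wC • C) (hMB : M ≠ B) (hMC : M ≠ C)
    (hA : wA ≤ 0) (hB : 0 ≤ wB) (hC : 0 ≤ wC) :
    signedBarrowTerm wA (dist M B) (dist M C) (∠ B M C) +
        signedBarrowTerm wB (dist M C) (dist M A) (∠ C M A) +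
        signedBarrowTerm wC (dist M A) (dist M B) (∠ A M B) ≤
      dist M A + dist M B + dist M C := by
  have hπ := fun h => angle_eq_pi_of_barycentric hw hM hMB hMC h hB hC
  rw [signedBarrowTerm.of_nonpos hA hπ, signedBarrowTerm.of_nonneg hB,
    signedBarrowTerm.of_nonneg hC, ← angle_add_angle_eq_of_barycentric hw hM hMB hMC hA hB hC,
    add_div]
  have := two_mul_cos_add_two_mul_cos_sub_two_mul_cos_add_le
    (√(dist M A)) (√(dist M B)) (√(dist M C)) (∠ C M A / 2) (∠ A M B / 2)
  rw [sq_sqrt dist_nonneg, sq_sqrt dist_nonneg, sq_sqrt dist_nonneg] at this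
  linarith

theorem signedBarrowTerm_sum_le (hw : wA + wB + wC = 1)
    (hM : M = wA • A + wB • B + wC • C) (hMA : M ≠ A) (hMB : M ≠ B) (hMC : M ≠ C)
    (hout : wA ≤ 0 ∨ wB ≤ 0 ∨ wC ≤ 0) :
    signedBarrowTerm wA (dist M B) (dist M C) (∠ B M C) +
        signedBarrowTerm wB (dist M C) (dist M A) (∠ C M A) +
        signedBarrowTerm wC (dist M A) (dist M B) (∠ A M B) ≤
      dist M A + dist M B + dist M C := by
  have hM₁ : M = wB • B + wC • C + wA • A := by rw [hM]; abel
  have hM₂ : M = wC • C + wA • A + wB • B := by rw [hM]; abel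
  have sumA := signedBarrowTerm_sum_le_of_nonpos_of_nonneg hw hM hMB hMC
  have sumB := signedBarrowTerm_sum_le_of_nonpos_of_nonneg (by linarith) hM₁ hMC hMA
  have sumC := signedBarrowTerm_sum_le_of_nonpos_of_nonneg (by linarith) hM₂ hMA hMB
  have hneg (P Q : V) {w : ℝ} (h : w < 0) :
      signedBarrowTerm w (dist M P) (dist M Q) (∠ P M Q) ≤ 0 :=
    signedBarrowTerm.nonpos h (angle_nonneg P M Q) (angle_le_pi P M Q)
  have hle (P Q : V) (w : ℝ) :
      signedBarrowTerm w (dist M P) (dist M Q) (∠ P M Q) ≤ dist M P + dist M Q :=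
    signedBarrowTerm.le_add dist_nonneg dist_nonneg
  rcases cyclic_sign_cases hout with ⟨hA, hB, hC⟩ | ⟨hB, hC, hA⟩ | ⟨hC, hA, hB⟩ |
      ⟨hA, hB⟩ | ⟨hB, hC⟩ | ⟨hC, hA⟩
  · exact sumA hA hB hC
  · linarith [sumB hB hC hA]
  · linarith [sumC hC hA hB]
  · linarith [hneg B C hA, hneg C A hB, hle A B wC, dist_nonneg (x := M) (y := C)]
  · linarith [hneg C A hB, hneg A B hC, hle B C wA, dist_nonneg (x := M) (y := A)]
  · linarith [hneg A B hC, hneg B C hA, hle C A wB, dist_nonneg (x := M) (y := B)]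

end Barycentric

theorem statement17_general (A B C M : EuclideanSpace ℝ (Fin 2))
    (wA wB wC : ℝ) (hw : wA + wB + wC = 1)
    (hM : M = wA • A + wB • B + wC • C)
    (hMA : M ≠ A) (hMB : M ≠ B) (hMC : M ≠ C)
    (hout : wA ≤ 0 ∨ wB ≤ 0 ∨ wC ≤ 0) :
    dist M A + dist M B + dist M C ≥
      (Real.sqrt (dist M C / dist M B) + Real.sqrt (dist M B / dist M C)) *
        (if wA < 0 then
            -(2 * dist M B * dist M C / (dist M B + dist M C) * Real.cos (∠ B M C / 2))
          else 2 * dist M B * dist M C / (dist M B + dist M C) * Real.cos (∠ B M C / 2)) +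
      (Real.sqrt (dist M C / dist M A) + Real.sqrt (dist M A / dist M C)) *
        (if wB < 0 then
            -(2 * dist M C * dist M A / (dist M C + dist M A) * Real.cos (∠ C M A / 2))
          else 2 * dist M C * dist M A / (dist M C + dist M A) * Real.cos (∠ C M A / 2)) +
      (Real.sqrt (dist M A / dist M B) + Real.sqrt (dist M B / dist M A)) *
        (if wC < 0 then
            -(2 * dist M A * dist M B / (dist M A + dist M B) * Real.cos (∠ A M B / 2))
          else 2 * dist M A * dist M B / (dist M A + dist M B) * Real.cos (∠ A M B / 2)) := by
  have ha := dist_pos.2 hMA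
  have hb := dist_pos.2 hMB
  have hc := dist_pos.2 hMC
  rw [ge_iff_le, add_comm (√(dist M C / dist M B)), sqrt_div_add_sqrt_div_mul_ite hb hc,
    sqrt_div_add_sqrt_div_mul_ite hc ha, sqrt_div_add_sqrt_div_mul_ite ha hb]
  exact signedBarrowTerm_sum_le hw hM hMA hMB hMC hout

theorem statement17 (A B C M : EuclideanSpace ℝ (Fin 2))
    (hABC : AffineIndependent ℝ ![A, B, C])
    (wA wB wC : ℝ) (hw : wA + wB + wC = 1)
    (hM : M = wA • A + wB • B + wC • C)
    (hMA : M ≠ A) (hMB : M ≠ B) (hMC : M ≠ C)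
    (hout : wA ≤ 0 ∨ wB ≤ 0 ∨ wC ≤ 0) :
    dist M A + dist M B + dist M C ≥
      (Real.sqrt (dist M C / dist M B) + Real.sqrt (dist M B / dist M C)) *
        (if wA < 0 then
            -(2 * dist M B * dist M C / (dist M B + dist M C) * Real.cos (∠ B M C / 2))
          else 2 * dist M B * dist M C / (dist M B + dist M C) * Real.cos (∠ B M C / 2)) +
      (Real.sqrt (dist M C / dist M A) + Real.sqrt (dist M A / dist M C)) *
        (if wB < 0 then
            -(2 * dist M C * dist M A / (dist M C + dist M A) * Real.cos (∠ C M A / 2))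
          else 2 * dist M C * dist M A / (dist M C + dist M A) * Real.cos (∠ C M A / 2)) +
      (Real.sqrt (dist M A / dist M B) + Real.sqrt (dist M B / dist M A)) *
        (if wC < 0 then
            -(2 * dist M A * dist M B / (dist M A + dist M B) * Real.cos (∠ A M B / 2))
          else 2 * dist M A * dist M B / (dist M A + dist M B) * Real.cos (∠ A M B / 2)) :=
  statement17_general A B C M wA wB wC hw hM hMA hMB hMC hout
end
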